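/- G is not solvable: for every natural number n, the n-th term G⁽ⁿ⁾ of the derived series of G is nontrivial. -/

import Mathlib

-- The generators `a` and `b` of the iterated monodromy group of `z^2-1`,
-- as functions on binary words (`false` = x = left, `true` = y = right),
-- defined by mutual recursion.
mutual
def aFun : List Bool → List Bool
  | [] => []
  | false :: w => true :: bFun w
  | true :: w => false :: w

def bFun : List Bool → List Bool
  | [] => []
  | false :: w => false :: aFun w
  | true :: w => true :: w
end

-- The inverses of `aFun`/`bFun`.
mutual
def aInv : List Bool → List Bool
  | [] => []
  | true :: w => false :: bInv w
  | false :: w => true :: w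

def bInv : List Bool → List Bool
  | [] => []
  | false :: w => false :: aInv w
  | true :: w => true :: w
end

mutual
theorem aFun_aInv : ∀ w, aFun (aInv w) = w
  | [] => rfl
  | true :: w => by simp [aInv, aFun, bFun_bInv w]
  | false :: w => by simp [aInv, aFun]

theorem bFun_bInv : ∀ w, bFun (bInv w) = w
  | [] => rfl
  | false :: w => by simp [bInv, bFun, aFun_aInv w]
  | true :: w => by simp [bInv, bFun]
end

mutual
theorem aInv_aFun : ∀ w, aInv (aFun w) = w
  | [] => rfl
  | false :: w => by simp [aFun, aInv, bInv_bFun w]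
  | true :: w => by simp [aFun, aInv]

theorem bInv_bFun : ∀ w, bInv (bFun w) = w
  | [] => rfl
  | false :: w => by simp [bFun, bInv, aInv_aFun w]
  | true :: w => by simp [bFun, bInv]
end

/-- `a` as a permutation of the set of binary words. -/
def aPerm : Equiv.Perm (List Bool) := ⟨aFun, aInv, aInv_aFun, aFun_aInv⟩
/-- `b` as a permutation of the set of binary words. -/
def bPerm : Equiv.Perm (List Bool) := ⟨bFun, bInv, bInv_bFun, bFun_bInv⟩

mutual
theorem aFun_length : ∀ w, (aFun w).length = w.length
  | [] => rfl
  | false :: w => by simp [aFun, bFun_length w]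
  | true :: w => by simp [aFun]

theorem bFun_length : ∀ w, (bFun w).length = w.length
  | [] => rfl
  | false :: w => by simp [bFun, aFun_length w]
  | true :: w => by simp [bFun]
end

mutual
theorem aFun_prefix : ∀ u v, u <+: v → aFun u <+: aFun v
  | [], v, _ => by simp [aFun]
  | false :: u, false :: v, h => by
      simp only [List.cons_prefix_cons] at h
      simpa [aFun, List.cons_prefix_cons] using bFun_prefix u v h.2
  | true :: u, true :: v, h => by
      simp only [List.cons_prefix_cons] at h
      simpa [aFun, List.cons_prefix_cons] using h.2
  | false :: u, true :: v, h => by simp [List.cons_prefix_cons] at h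
  | true :: u, false :: v, h => by simp [List.cons_prefix_cons] at h
  | _ :: u, [], h => by simp at h

theorem bFun_prefix : ∀ u v, u <+: v → bFun u <+: bFun v
  | [], v, _ => by simp [bFun]
  | false :: u, false :: v, h => by
      simp only [List.cons_prefix_cons] at h
      simpa [bFun, List.cons_prefix_cons] using aFun_prefix u v h.2
  | true :: u, true :: v, h => by
      simp only [List.cons_prefix_cons] at h
      simpa [bFun, List.cons_prefix_cons] using h.2
  | false :: u, true :: v, h => by simp [List.cons_prefix_cons] at h
  | true :: u, false :: v, h => by simp [List.cons_prefix_cons] at h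
  | _ :: u, [], h => by simp at h
end

/-- The group of automorphisms of the binary rooted tree: bijections of the set of
binary words preserving word length and the prefix relation. -/
def treeAut : Subgroup (Equiv.Perm (List Bool)) where
  carrier := {f | (∀ w, (f w).length = w.length) ∧ ∀ u v : List Bool, u <+: v → f u <+: f v}
  one_mem' := ⟨fun _ => rfl, fun _ _ h => h⟩
  mul_mem' := by
    rintro f g ⟨hf1, hf2⟩ ⟨hg1, hg2⟩
    exact ⟨fun w => (hf1 _).trans (hg1 w), fun u v h => hf2 _ _ (hg2 _ _ h)⟩
  inv_mem' := by
    rintro f ⟨hf1, hf2⟩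
    constructor
    · intro w
      have := hf1 (f⁻¹ w)
      simpa using this.symm
    · intro u v h
      have hlen : (f⁻¹ u).length ≤ (f⁻¹ v).length := by
        have h1 : (f⁻¹ u).length = u.length := by have := hf1 (f⁻¹ u); simpa using this.symm
        have h2 : (f⁻¹ v).length = v.length := by have := hf1 (f⁻¹ v); simpa using this.symm
        rw [h1, h2]; exact h.length_le
      set p := (f⁻¹ v).take (f⁻¹ u).length with hp
      have hpv : p <+: f⁻¹ v := List.take_prefix _ _
      have hplen : p.length = (f⁻¹ u).length := by
        rw [hp, List.length_take]; exact Nat.min_eq_left hlen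
      have hfp : f p <+: v := by
        have := hf2 _ _ hpv
        simpa using this
      have hfplen : (f p).length = u.length := by
        rw [hf1 p, hplen]
        have := hf1 (f⁻¹ u); simpa using this.symm
      have : f p = u := by
        rcases List.prefix_or_prefix_of_prefix hfp h with h' | h'
        · exact h'.eq_of_length hfplen
        · exact (h'.eq_of_length hfplen.symm).symm
      have : p = f⁻¹ u := by
        have := congrArg (f⁻¹ : Equiv.Perm (List Bool)) this
        simpa using this
      rw [← this]; exact hpv

/-- The generator `a` as a tree automorphism. -/
def A : treeAut := ⟨aPerm, aFun_length, aFun_prefix⟩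
/-- The generator `b` as a tree automorphism. -/
def B : treeAut := ⟨bPerm, bFun_length, bFun_prefix⟩

/-- The iterated monodromy group of `z ↦ z² - 1`: the subgroup of the automorphism
group of the binary rooted tree generated by `a` and `b`. -/
def G : Subgroup treeAut := Subgroup.closure {A, B}

/-- Apply a tree automorphism to a binary word. -/
def app (g : treeAut) (w : List Bool) : List Bool := g.val w


/-! ### Auxiliary machinery for non-solvability -/

section NotSolvable

open scoped commutatorElement

/-- Place a function on the left subtree. -/
def lfunc (f : List Bool → List Bool) : List Bool → List Bool
  | [] => []
  | false :: w => false :: f w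
  | true :: w => true :: w

/-- Place a function on the right subtree. -/
def rfunc (f : List Bool → List Bool) : List Bool → List Bool
  | [] => []
  | false :: w => false :: w
  | true :: w => true :: f w

def lpermE (g : Equiv.Perm (List Bool)) : Equiv.Perm (List Bool) where
  toFun := lfunc g
  invFun := lfunc g.symm
  left_inv := by
    intro w
    match w with
    | [] => rfl
    | false :: w => simp [lfunc]
    | true :: w => rfl
  right_inv := by
    intro w
    match w with
    | [] => rfl
    | false :: w => simp [lfunc]
    | true :: w => rfl

def rpermE (g : Equiv.Perm (List Bool)) : Equiv.Perm (List Bool) where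
  toFun := rfunc g
  invFun := rfunc g.symm
  left_inv := by
    intro w
    match w with
    | [] => rfl
    | true :: w => simp [rfunc]
    | false :: w => rfl
  right_inv := by
    intro w
    match w with
    | [] => rfl
    | true :: w => simp [rfunc]
    | false :: w => rfl

theorem mem_treeAut {f : Equiv.Perm (List Bool)}
    (h1 : ∀ w, (f w).length = w.length)
    (h2 : ∀ u v : List Bool, u <+: v → f u <+: f v) : f ∈ treeAut := ⟨h1, h2⟩

theorem treeAut_length (g : treeAut) (w : List Bool) : (g.val w).length = w.length := g.2.1 w

theorem treeAut_prefix (g : treeAut) {u v : List Bool} (h : u <+: v) : g.val u <+: g.val v :=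
  g.2.2 u v h

theorem lfunc_length (f : List Bool → List Bool) (hf : ∀ w, (f w).length = w.length) :
    ∀ w, (lfunc f w).length = w.length
  | [] => rfl
  | false :: w => by simp [lfunc, hf w]
  | true :: w => by simp [lfunc]

theorem rfunc_length (f : List Bool → List Bool) (hf : ∀ w, (f w).length = w.length) :
    ∀ w, (rfunc f w).length = w.length
  | [] => rfl
  | true :: w => by simp [rfunc, hf w]
  | false :: w => by simp [rfunc]

theorem lfunc_prefix (f : List Bool → List Bool) (hf : ∀ u v : List Bool, u <+: v → f u <+: f v) :
    ∀ u v, u <+: v → lfunc f u <+: lfunc f v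
  | [], v, _ => by simp [lfunc]
  | false :: u, false :: v, h => by
      simp only [List.cons_prefix_cons] at h
      simpa [lfunc, List.cons_prefix_cons] using hf u v h.2
  | true :: u, true :: v, h => by
      simp only [List.cons_prefix_cons] at h
      simpa [lfunc, List.cons_prefix_cons] using h.2
  | false :: u, true :: v, h => by simp [List.cons_prefix_cons] at h
  | true :: u, false :: v, h => by simp [List.cons_prefix_cons] at h
  | _ :: u, [], h => by simp at h

theorem rfunc_prefix (f : List Bool → List Bool) (hf : ∀ u v : List Bool, u <+: v → f u <+: f v) :
    ∀ u v, u <+: v → rfunc f u <+: rfunc f v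
  | [], v, _ => by simp [rfunc]
  | true :: u, true :: v, h => by
      simp only [List.cons_prefix_cons] at h
      simpa [rfunc, List.cons_prefix_cons] using hf u v h.2
  | false :: u, false :: v, h => by
      simp only [List.cons_prefix_cons] at h
      simpa [rfunc, List.cons_prefix_cons] using h.2
  | false :: u, true :: v, h => by simp [List.cons_prefix_cons] at h
  | true :: u, false :: v, h => by simp [List.cons_prefix_cons] at h
  | _ :: u, [], h => by simp at h

/-- Placing an automorphism on the left subtree, as a group homomorphism. -/
def Lhom : treeAut →* treeAut where
  toFun g := ⟨lpermE g.val,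
    mem_treeAut (lfunc_length _ (fun w => treeAut_length g w))
      (lfunc_prefix _ (fun u v h => treeAut_prefix g h))⟩
  map_one' := by
    apply Subtype.ext; apply Equiv.ext; intro w
    match w with
    | [] => rfl
    | false :: w => rfl
    | true :: w => rfl
  map_mul' g h := by
    apply Subtype.ext; apply Equiv.ext; intro w
    match w with
    | [] => rfl
    | false :: w => rfl
    | true :: w => rfl

/-- Placing an automorphism on the right subtree, as a group homomorphism. -/
def Rhom : treeAut →* treeAut where
  toFun g := ⟨rpermE g.val,
    mem_treeAut (rfunc_length _ (fun w => treeAut_length g w))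
      (rfunc_prefix _ (fun u v h => treeAut_prefix g h))⟩
  map_one' := by
    apply Subtype.ext; apply Equiv.ext; intro w
    match w with
    | [] => rfl
    | false :: w => rfl
    | true :: w => rfl
  map_mul' g h := by
    apply Subtype.ext; apply Equiv.ext; intro w
    match w with
    | [] => rfl
    | false :: w => rfl
    | true :: w => rfl

theorem app_mul (g h : treeAut) (w : List Bool) : (g * h).val w = g.val (h.val w) := rfl
theorem app_A (w : List Bool) : A.val w = aFun w := rfl
theorem app_Ainv (w : List Bool) : (A⁻¹ : treeAut).val w = aInv w := rfl
theorem app_B (w : List Bool) : B.val w = bFun w := rfl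
theorem app_Binv (w : List Bool) : (B⁻¹ : treeAut).val w = bInv w := rfl
theorem app_Lhom (g : treeAut) (w : List Bool) : (Lhom g).val w = lfunc g.val w := rfl
theorem app_Rhom (g : treeAut) (w : List Bool) : (Rhom g).val w = rfunc g.val w := rfl
theorem apply_A_inv (w : List Bool) : (A.val)⁻¹ w = aInv w := rfl
theorem apply_B_inv (w : List Bool) : (B.val)⁻¹ w = bInv w := rfl
theorem apply_Lhom_inv (g : treeAut) (w : List Bool) :
    ((Lhom g).val)⁻¹ w = lfunc ((g.val)⁻¹ : Equiv.Perm (List Bool)) w := rfl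
theorem apply_Rhom_inv (g : treeAut) (w : List Bool) :
    ((Rhom g).val)⁻¹ w = rfunc ((g.val)⁻¹ : Equiv.Perm (List Bool)) w := rfl
theorem symm_A (w : List Bool) : Equiv.symm A.val w = aInv w := rfl
theorem symm_B (w : List Bool) : Equiv.symm B.val w = bInv w := rfl
theorem symm_Lhom (g : treeAut) (w : List Bool) :
    Equiv.symm (Lhom g).val w = lfunc (Equiv.symm g.val) w := rfl
theorem symm_Rhom (g : treeAut) (w : List Bool) :
    Equiv.symm (Rhom g).val w = rfunc (Equiv.symm g.val) w := rfl

theorem app_Lhom_inv (g : treeAut) (w : List Bool) :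
    ((Lhom g)⁻¹ : treeAut).val w = lfunc (g⁻¹ : treeAut).val w := by
  rw [← map_inv]; rfl
theorem app_Rhom_inv (g : treeAut) (w : List Bool) :
    ((Rhom g)⁻¹ : treeAut).val w = rfunc (g⁻¹ : treeAut).val w := by
  rw [← map_inv]; rfl

/-- Key self-similarity identities. -/
theorem idB : B = Lhom A := by
  apply Subtype.ext; apply Equiv.ext; intro w
  match w with
  | [] => rfl
  | false :: w => rfl
  | true :: w => rfl

theorem idA2 : A * A = Lhom B * Rhom B := by
  apply Subtype.ext; apply Equiv.ext; intro w
  match w with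
  | [] => rfl
  | false :: w => rfl
  | true :: w => rfl

theorem idLR (g h : treeAut) : Lhom g * Rhom h = Rhom h * Lhom g := by
  apply Subtype.ext; apply Equiv.ext; intro w
  match w with
  | [] => rfl
  | false :: w => rfl
  | true :: w => rfl

theorem idR (h : treeAut) : A⁻¹ * Lhom h * A = Rhom h := by
  apply Subtype.ext; apply Equiv.ext; intro w
  match w with
  | [] => rfl
  | false :: w =>
      simp [app_mul, app_A, app_Ainv, app_Lhom, app_Rhom, apply_A_inv, apply_B_inv, apply_Lhom_inv, apply_Rhom_inv, symm_A, symm_B, symm_Lhom, symm_Rhom, aFun, bFun, aInv, bInv, lfunc, rfunc, bInv_bFun, bFun_bInv, aFun_aInv, aInv_aFun]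
  | true :: w =>
      simp [app_mul, app_A, app_Ainv, app_Lhom, app_Rhom, apply_A_inv, apply_B_inv, apply_Lhom_inv, apply_Rhom_inv, symm_A, symm_B, symm_Lhom, symm_Rhom, aFun, bFun, aInv, bInv, lfunc, rfunc, bInv_bFun, bFun_bInv, aFun_aInv, aInv_aFun]

/-- The commutator `c = [a,b]`. -/
def Cc : treeAut := A * B * A⁻¹ * B⁻¹

theorem idLC : Lhom Cc = B * A * A * B⁻¹ * A⁻¹ * A⁻¹ := by
  apply Subtype.ext; apply Equiv.ext; intro w
  match w with
  | [] => rfl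
  | false :: w =>
      simp [Cc, app_mul, app_A, app_Ainv, app_B, app_Binv, app_Lhom, app_Rhom,
        apply_A_inv, apply_B_inv, apply_Lhom_inv, apply_Rhom_inv, symm_A, symm_B, symm_Lhom, symm_Rhom,
        aFun, bFun, aInv, bInv, lfunc, rfunc, bFun_bInv, bInv_bFun, aFun_aInv, aInv_aFun]
  | true :: w =>
      simp [Cc, app_mul, app_A, app_Ainv, app_B, app_Binv, app_Lhom, app_Rhom,
        apply_A_inv, apply_B_inv, apply_Lhom_inv, apply_Rhom_inv, symm_A, symm_B, symm_Lhom, symm_Rhom,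
        aFun, bFun, aInv, bInv, lfunc, rfunc, bFun_bInv, bInv_bFun, aFun_aInv, aInv_aFun]

theorem A_mem : A ∈ G := Subgroup.subset_closure (Set.mem_insert _ _)
theorem B_mem : B ∈ G := Subgroup.subset_closure (Set.mem_insert_of_mem _ rfl)
theorem Cc_mem : Cc ∈ G := by
  exact mul_mem (mul_mem (mul_mem A_mem B_mem) (inv_mem A_mem)) (inv_mem B_mem)

/-- The normal closure of `c` in `G`; `G` is weakly branch over it. -/
def H : Subgroup treeAut := Subgroup.closure {x | ∃ u ∈ G, x = u * Cc * u⁻¹}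

theorem H_le_G : H ≤ G := by
  apply (Subgroup.closure_le _).2
  rintro x ⟨u, hu, rfl⟩
  exact mul_mem (mul_mem hu Cc_mem) (inv_mem hu)

theorem Cc_mem_H : Cc ∈ H :=
  Subgroup.subset_closure ⟨1, one_mem G, by group⟩

theorem conj_Cc_mem_H : A * Cc * A⁻¹ ∈ H :=
  Subgroup.subset_closure ⟨A, A_mem, rfl⟩

theorem H_conj (gg : treeAut) (hgg : gg ∈ G) : ∀ h ∈ H, gg * h * gg⁻¹ ∈ H := by
  intro h hh
  induction hh using Subgroup.closure_induction with
  | mem x hx =>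
      obtain ⟨u, hu, rfl⟩ := hx
      have e : gg * (u * Cc * u⁻¹) * gg⁻¹ = (gg * u) * Cc * (gg * u)⁻¹ := by group
      rw [e]
      exact Subgroup.subset_closure ⟨gg * u, mul_mem hgg hu, rfl⟩
  | one => simpa using one_mem H
  | mul x y hx hy hx' hy' =>
      have e : gg * (x * y) * gg⁻¹ = (gg * x * gg⁻¹) * (gg * y * gg⁻¹) := by group
      rw [e]; exact mul_mem hx' hy'
  | inv x hx hx' =>
      have e : gg * x⁻¹ * gg⁻¹ = (gg * x * gg⁻¹)⁻¹ := by group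
      rw [e]; exact inv_mem hx'

/-- Section lemma: every `u ∈ G` has a lift `g ∈ G` with `g L(t) g⁻¹ = L(u t u⁻¹)`. -/
theorem secL : ∀ u ∈ G, ∃ gg ∈ G, ∀ t : treeAut, gg * Lhom t * gg⁻¹ = Lhom (u * t * u⁻¹) := by
  intro u hu
  induction hu using Subgroup.closure_induction with
  | mem x hx =>
      rcases hx with rfl | hx
      · refine ⟨B, B_mem, fun t => ?_⟩
        rw [idB, ← map_inv, ← map_mul, ← map_mul]
      · rcases hx with rfl
        refine ⟨A * A, mul_mem A_mem A_mem, fun t => ?_⟩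
        rw [idA2]
        calc Lhom B * Rhom B * Lhom t * (Lhom B * Rhom B)⁻¹
            = Lhom B * (Rhom B * Lhom t * (Rhom B)⁻¹) * (Lhom B)⁻¹ := by group
          _ = Lhom B * (Lhom t * Rhom B * (Rhom B)⁻¹) * (Lhom B)⁻¹ := by rw [← idLR t B]
          _ = Lhom B * Lhom t * (Lhom B)⁻¹ := by group
          _ = Lhom (B * t * B⁻¹) := by rw [map_mul, map_mul, map_inv]
  | one =>
      refine ⟨1, one_mem G, fun t => ?_⟩
      simp
  | mul x y hx hy hx' hy' =>
      obtain ⟨g1, hg1, e1⟩ := hx'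
      obtain ⟨g2, hg2, e2⟩ := hy'
      refine ⟨g1 * g2, mul_mem hg1 hg2, fun t => ?_⟩
      have e : g1 * g2 * Lhom t * (g1 * g2)⁻¹ = g1 * (g2 * Lhom t * g2⁻¹) * g1⁻¹ := by group
      rw [e, e2 t, e1 (y * t * y⁻¹)]
      exact congrArg Lhom (by group)
  | inv x hx hx' =>
      obtain ⟨g1, hg1, e1⟩ := hx'
      refine ⟨g1⁻¹, inv_mem hg1, fun t => ?_⟩
      have e1' := e1 (x⁻¹ * t * x)
      have e2 : Lhom (x * (x⁻¹ * t * x) * x⁻¹) = Lhom t := by congr 1; group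
      rw [e2] at e1'
      rw [← e1']
      group

theorem Lhom_Cc_mem_H : Lhom Cc ∈ H := by
  have e : Lhom Cc = Cc⁻¹ * (A * Cc * A⁻¹)⁻¹ := by
    rw [idLC]
    show _ = _
    simp only [Cc]
    group
  rw [e]
  exact mul_mem (inv_mem Cc_mem_H) (inv_mem conj_Cc_mem_H)

theorem Lhom_mem_H : ∀ h ∈ H, Lhom h ∈ H := by
  have hmap : Subgroup.map Lhom H ≤ H := by
    rw [H, MonoidHom.map_closure]
    apply (Subgroup.closure_le _).2
    rintro x ⟨y, ⟨u, hu, rfl⟩, rfl⟩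
    obtain ⟨gg, hgg, e⟩ := secL u hu
    rw [← e Cc]
    exact H_conj gg hgg _ Lhom_Cc_mem_H
  intro h hh
  exact hmap (Subgroup.mem_map_of_mem Lhom hh)

theorem Rhom_mem_H : ∀ h ∈ H, Rhom h ∈ H := by
  intro h hh
  have e : Rhom h = A⁻¹ * Lhom h * (A⁻¹)⁻¹ := by rw [inv_inv]; exact (idR h).symm
  rw [e]
  exact H_conj A⁻¹ (inv_mem A_mem) _ (Lhom_mem_H h hh)

/-- Place an automorphism at the vertex `v`. -/
def placehom : List Bool → (treeAut →* treeAut)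
  | [] => MonoidHom.id treeAut
  | false :: v => Lhom.comp (placehom v)
  | true :: v => Rhom.comp (placehom v)

theorem placehom_mem_H : ∀ (v : List Bool) (h : treeAut), h ∈ H → placehom v h ∈ H
  | [], h, hh => hh
  | false :: v, h, hh => Lhom_mem_H _ (placehom_mem_H v h hh)
  | true :: v, h, hh => Rhom_mem_H _ (placehom_mem_H v h hh)

theorem placehom_app : ∀ (v : List Bool) (g : treeAut) (u : List Bool),
    (placehom v g).val (v ++ u) = v ++ g.val u
  | [], g, u => rfl
  | false :: v, g, u => by
      show false :: (placehom v g).val (v ++ u) = _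
      rw [placehom_app v g u]; rfl
  | true :: v, g, u => by
      show true :: (placehom v g).val (v ++ u) = _
      rw [placehom_app v g u]; rfl

theorem placehom_fix : ∀ (v : List Bool) (g : treeAut) (u : List Bool),
    ¬ v <+: u → (placehom v g).val u = u
  | [], g, u, h => absurd List.nil_prefix h
  | c :: v, g, [], h => by cases c <;> rfl
  | false :: v, g, false :: u, h => by
      have h' : ¬ v <+: u := fun hp => h (by simp [List.cons_prefix_cons, hp])
      show false :: (placehom v g).val u = _
      rw [placehom_fix v g u h']
  | false :: v, g, true :: u, h => rfl
  | true :: v, g, false :: u, h => rfl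
  | true :: v, g, true :: u, h => by
      have h' : ¬ v <+: u := fun hp => h (by simp [List.cons_prefix_cons, hp])
      show true :: (placehom v g).val u = _
      rw [placehom_fix v g u h']

theorem placehom_fix_root (v : List Bool) (g : treeAut) : (placehom v g).val v = v := by
  have := placehom_app v g []
  have h0 : g.val [] = [] := by
    have := treeAut_length g []
    exact List.length_eq_zero_iff.mp this
  simpa [h0] using this

theorem app_inv_app (g : treeAut) (w : List Bool) : g.val ((g⁻¹ : treeAut).val w) = w := by
  show g.val (g.val⁻¹ w) = w
  simp

theorem not_prefix_of_ne {v v' u : List Bool} (hlen : v'.length = v.length) (hne : v' ≠ v)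
    (h1 : v <+: u) : ¬ v' <+: u := by
  intro h2
  rcases List.prefix_or_prefix_of_prefix h1 h2 with h | h
  · exact hne (h.eq_of_length hlen.symm).symm
  · exact hne (h.eq_of_length hlen)

theorem conj_fix (gg t : treeAut) {v u : List Bool}
    (ht : ∀ w, ¬ v <+: w → t.val w = w) (hu : ¬ (gg.val v) <+: u) :
    (gg * t * gg⁻¹).val u = u := by
  have h1 : ¬ v <+: (gg⁻¹ : treeAut).val u := by
    intro hp
    have h2 := treeAut_prefix gg hp
    rw [app_inv_app] at h2
    exact hu h2
  show gg.val (t.val ((gg⁻¹ : treeAut).val u)) = u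
  rw [ht _ h1, app_inv_app]

/-- The sub-invariance: automorphisms fixing `v` map the subtree above `v` to itself. -/
theorem sub_inv (t : treeAut) {v u : List Bool} (hfix : t.val v = v) (h : v <+: u) :
    v <+: t.val u := by
  have := treeAut_prefix t h
  rwa [hfix] at this

/-- Main step: any nontrivial normal subgroup of `G` has nontrivial commutator subgroup. -/
theorem derived_step (N : Subgroup G) (hN : N.Normal) (hnb : N ≠ ⊥) : ⁅N, N⁆ ≠ ⊥ := by
  classical
  -- pick a nontrivial element g of N
  rcases N.bot_or_exists_ne_one with h | ⟨g, hgN, hg1⟩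
  · exact absurd h hnb
  -- find a word moved by g
  have hex : ∃ v, (g : treeAut).val v ≠ v := by
    by_contra hc
    push_neg at hc
    exact hg1 (Subtype.ext (Subtype.ext (Equiv.ext hc)))
  obtain ⟨v, hv⟩ := hex
  set gt : treeAut := (g : treeAut) with hgt
  have hlen : (gt.val v).length = v.length := treeAut_length gt v
  have hne : gt.val v ≠ v := hv
  -- the two noncommuting elements placed at vertex v
  set Q : treeAut := A * Cc * A⁻¹ with hQ
  set r : treeAut := placehom v Cc with hr
  set s : treeAut := placehom v Q with hs
  have hrG : r ∈ G := H_le_G (placehom_mem_H v Cc Cc_mem_H)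
  have hsG : s ∈ G := H_le_G (placehom_mem_H v Q conj_Cc_mem_H)
  set rG : G := ⟨r, hrG⟩ with hrGdef
  set sG : G := ⟨s, hsG⟩ with hsGdef
  set x : G := rG * g * rG⁻¹ * g⁻¹ with hx
  set y : G := sG * g * sG⁻¹ * g⁻¹ with hy
  have hxN : x ∈ N := N.mul_mem (hN.conj_mem g hgN rG) (N.inv_mem hgN)
  have hyN : y ∈ N := N.mul_mem (hN.conj_mem g hgN sG) (N.inv_mem hgN)
  have hzC : ⁅x, y⁆ ∈ ⁅N, N⁆ := Subgroup.commutator_mem_commutator hxN hyN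
  -- action of conjugation-commutators on the subtree above v
  have key_act : ∀ (PP : treeAut) (u0 : List Bool), v <+: u0 →
      ((placehom v PP * gt * (placehom v PP)⁻¹ * gt⁻¹).val u0 = (placehom v PP).val u0 ∧
       ((placehom v PP * gt * (placehom v PP)⁻¹ * gt⁻¹)⁻¹).val u0
          = (placehom v PP⁻¹).val u0) := by
    intro PP u0 hu0
    have hnp : ¬ gt.val v <+: u0 := not_prefix_of_ne hlen hne hu0
    have hinv : (placehom v PP)⁻¹ = placehom v PP⁻¹ := by rw [← map_inv]
    constructor
    · have e : placehom v PP * gt * (placehom v PP)⁻¹ * gt⁻¹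
          = placehom v PP * (gt * (placehom v PP)⁻¹ * gt⁻¹) := by group
      rw [e, app_mul]
      rw [hinv, conj_fix gt (placehom v PP⁻¹) (placehom_fix v PP⁻¹) hnp]
    · have e : (placehom v PP * gt * (placehom v PP)⁻¹ * gt⁻¹)⁻¹
          = (gt * placehom v PP * gt⁻¹) * (placehom v PP)⁻¹ := by group
      rw [e, app_mul, hinv]
      have hu1 : v <+: (placehom v PP⁻¹).val u0 :=
        sub_inv _ (placehom_fix_root v PP⁻¹) hu0
      have hnp1 : ¬ gt.val v <+: (placehom v PP⁻¹).val u0 :=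
        not_prefix_of_ne hlen hne hu1
      rw [conj_fix gt (placehom v PP) (placehom_fix v PP) hnp1]
  -- evaluate the commutator at v ++ u₀
  set u0 : List Bool := [false, true, false, false] with hu0def
  set xT : treeAut := (x : treeAut) with hxT
  set yT : treeAut := (y : treeAut) with hyT
  have hxTe : xT = r * gt * r⁻¹ * gt⁻¹ := by
    rw [hxT, hx]; push_cast; rfl
  have hyTe : yT = s * gt * s⁻¹ * gt⁻¹ := by
    rw [hyT, hy]; push_cast; rfl
  have hprefix : ∀ w : List Bool, v <+: v ++ w := fun w => List.prefix_append v w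
  -- step 1
  have s1 : (yT⁻¹).val (v ++ u0) = v ++ (Q⁻¹ : treeAut).val u0 := by
    rw [hyTe, hs]
    rw [(key_act Q (v ++ u0) (hprefix u0)).2]
    exact placehom_app v Q⁻¹ u0
  have hu1 : v <+: v ++ (Q⁻¹ : treeAut).val u0 := hprefix _
  -- step 2
  have s2 : (xT⁻¹).val (v ++ (Q⁻¹ : treeAut).val u0)
      = v ++ (Cc⁻¹ : treeAut).val ((Q⁻¹ : treeAut).val u0) := by
    rw [hxTe, hr]
    rw [(key_act Cc _ hu1).2]
    exact placehom_app v Cc⁻¹ _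
  -- step 3
  have s3 : yT.val (v ++ (Cc⁻¹ : treeAut).val ((Q⁻¹ : treeAut).val u0))
      = v ++ Q.val ((Cc⁻¹ : treeAut).val ((Q⁻¹ : treeAut).val u0)) := by
    rw [hyTe, hs]
    rw [(key_act Q _ (hprefix _)).1]
    exact placehom_app v Q _
  -- step 4
  have s4 : xT.val (v ++ Q.val ((Cc⁻¹ : treeAut).val ((Q⁻¹ : treeAut).val u0)))
      = v ++ Cc.val (Q.val ((Cc⁻¹ : treeAut).val ((Q⁻¹ : treeAut).val u0))) := by
    rw [hxTe, hr]
    rw [(key_act Cc _ (hprefix _)).1]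
    exact placehom_app v Cc _
  -- the total action
  have coez : ((⁅x, y⁆ : G) : treeAut) = xT * yT * xT⁻¹ * yT⁻¹ := by
    rw [commutatorElement_def]
    push_cast
    rfl
  have hcomp : ((⁅x, y⁆ : G) : treeAut).val (v ++ u0)
      = v ++ Cc.val (Q.val ((Cc⁻¹ : treeAut).val ((Q⁻¹ : treeAut).val u0))) := by
    rw [coez]
    rw [app_mul, app_mul, app_mul, s1, s2, s3, s4]
  have hval : Cc.val (Q.val ((Cc⁻¹ : treeAut).val ((Q⁻¹ : treeAut).val u0)))
      = [false, true, false, true] := by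
    rw [hQ, hu0def]
    decide
  have hzne : ⁅x, y⁆ ≠ (1 : G) := by
    intro h1
    rw [h1, hval] at hcomp
    have h2 : v ++ u0 = v ++ [false, true, false, true] := by
      have h3 : ((1 : G) : treeAut).val (v ++ u0) = v ++ u0 := rfl
      rw [h3] at hcomp
      exact hcomp
    have h4 := List.append_cancel_left h2
    rw [hu0def] at h4
    exact absurd h4 (by decide)
  intro hbot
  rw [hbot] at hzC
  exact hzne (Subgroup.mem_bot.mp hzC)

end NotSolvable

/-- `G` is not solvable: every term of its derived series is nontrivial. -/
theorem G_not_solvable (n : ℕ) : derivedSeries G n ≠ ⊥ := by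
  induction n with
  | zero =>
      rw [derivedSeries_zero]
      intro h
      have hA : (⟨A, A_mem⟩ : G) ∈ (⊤ : Subgroup G) := trivial
      rw [h] at hA
      have h1 : (⟨A, A_mem⟩ : G) = 1 := Subgroup.mem_bot.mp hA
      have h2 := congrArg (fun z : G => ((z : treeAut)).val [false]) h1
      have h3 : ([true] : List Bool) = [false] := h2
      simp at h3
  | succ n ih =>
      rw [derivedSeries_succ]
      exact derived_step _ (derivedSeries_normal _ _) ih
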